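/- arXiv:2309.07299 — 3 statements merged into one kernel-verified Lean document; each statement's English description precedes it below -/
import Mathlib

section
/- With a and b as in the elliptical footprint formulas, b²/a² = (cos²ψ − sin²θ)/cos²θ, hence the eccentricity ℰ = √(1 − b²/a²) satisfies ℰ² = (cos²θ − cos²ψ + sin²θ)/cos²θ = (1 − cos²ψ)/cos²θ = sin²ψ/cos²θ, so ℰ = sinψ/cosθ. -/
open Real

theorem stmt_1 (H θ ψ : ℝ) (hH : 0 < H) (hθ : θ ∈ Set.Ioo 0 (π/2))
    (hψ : ψ ∈ Set.Ico 0 (π/2)) (hcone : Real.cos ψ ^ 2 - Real.sin θ ^ 2 > 0)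
    (a b E : ℝ)
    (ha : a = H * Real.sin (2*θ) / (2 * (Real.cos ψ ^ 2 - Real.sin θ ^ 2)))
    (hb : b = H * Real.sin θ / Real.sqrt (Real.cos ψ ^ 2 - Real.sin θ ^ 2))
    (hE : E = Real.sqrt (1 - b^2 / a^2)) :
    b^2 / a^2 = (Real.cos ψ ^ 2 - Real.sin θ ^ 2) / Real.cos θ ^ 2 ∧
    E^2 = Real.sin ψ ^ 2 / Real.cos θ ^ 2 ∧
    E = Real.sin ψ / Real.cos θ := by
  obtain ⟨hθ0, hθ1⟩ := hθ
  obtain ⟨hψ0, hψ1⟩ := hψ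
  have hsθ : 0 < Real.sin θ := Real.sin_pos_of_pos_of_lt_pi hθ0 (by linarith [Real.pi_pos])
  have hcθ : 0 < Real.cos θ := Real.cos_pos_of_mem_Ioo ⟨by linarith [Real.pi_pos], hθ1⟩
  have hsψ : 0 ≤ Real.sin ψ := Real.sin_nonneg_of_nonneg_of_le_pi hψ0 (by linarith [Real.pi_pos])
  have hsq : Real.sqrt (Real.cos ψ ^ 2 - Real.sin θ ^ 2) ^ 2 = Real.cos ψ ^ 2 - Real.sin θ ^ 2 :=
    Real.sq_sqrt hcone.le
  have key : b^2 / a^2 = (Real.cos ψ ^ 2 - Real.sin θ ^ 2) / Real.cos θ ^ 2 := by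
    rw [ha, hb, Real.sin_two_mul]
    rw [div_pow, div_pow, hsq]
    rw [div_div_div_eq]
    field_simp
  have hpyth : Real.sin ψ ^ 2 = 1 - Real.cos ψ ^ 2 := by
    have := Real.sin_sq_add_cos_sq ψ; linarith
  have hE2 : 1 - b^2/a^2 = Real.sin ψ ^ 2 / Real.cos θ ^ 2 := by
    rw [key, hpyth]
    have h1 : Real.sin θ ^ 2 + Real.cos θ ^ 2 = 1 := Real.sin_sq_add_cos_sq θ
    field_simp
    linarith
  refine ⟨key, ?_, ?_⟩
  · rw [hE, Real.sq_sqrt, hE2]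
    rw [hE2]; positivity
  · rw [hE, hE2, ← div_pow, Real.sqrt_sq (by positivity)]
end

section
/- For a point uniformly distributed on the ellipse {(x,y) : x²/a² + y²/b² ≤ 1} with 0 < b ≤ a, the radial distance r = √(x²+y²) from the center has probability density f_r(r) = 2r/(ab) for 0 ≤ r ≤ b and f_r(r) = (4r/(πab))·arccos(√(r² − b²)/(ℰ r)) for b < r ≤ a, where ℰ = √(1 − b²/a²); in particular this density integrates to 1 over [0, a]. -/
open Real MeasureTheory Set
open scoped ENNReal

/-!
In polar coordinates the point `(r cos θ, r sin θ)` lies in the ellipse iff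
`r² - b² ≤ ℰ² r² cos² θ`. For `r ≤ b` this holds for every angle; for `b < r ≤ a` it says
`|cos θ| ≥ c := √(r² - b²) / (ℰ r) ∈ (0, 1]`, four arcs of total length `4 arccos c`.
So the area of the part of the ellipse within distance `t` of the centre is
`∫₀ᵗ r · (angular measure) dr = π a b ∫₀ᵗ f_r`. Taking `t = a` and comparing with the area
`π a b` of the ellipse, the image of the unit disc under `(x, y) ↦ (a x, b y)`, gives `∫₀ᵃ f_r = 1`.
-/

lemma Real.le_cos_iff_abs_le_arccos {c θ : ℝ} (hc₀ : -1 ≤ c) (hc₁ : c ≤ 1) (hθ : |θ| ≤ π) :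
    c ≤ cos θ ↔ |θ| ≤ arccos c := by
  rw [← cos_abs, ← strictAntiOn_arccos.le_iff_ge ⟨neg_one_le_cos _, cos_le_one _⟩ ⟨hc₀, hc₁⟩,
    arccos_cos (abs_nonneg θ) hθ]

lemma Real.cos_le_neg_iff_pi_sub_arccos_le_abs {c θ : ℝ} (hc₀ : -1 ≤ c) (hc₁ : c ≤ 1)
    (hθ : |θ| ≤ π) : cos θ ≤ -c ↔ π - arccos c ≤ |θ| := by
  have h : abs (π - |θ|) ≤ π := abs_le.2 ⟨by linarith [abs_nonneg θ], by linarith [abs_nonneg θ]⟩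
  rw [le_neg, ← cos_abs, ← cos_pi_sub, le_cos_iff_abs_le_arccos hc₀ hc₁ h,
    abs_of_nonneg (by linarith), sub_le_comm]

lemma volume_setOf_le_abs_cos {c : ℝ} (hc₀ : 0 < c) (hc₁ : c ≤ 1) :
    volume {θ | θ ∈ Ioo (-π) π ∧ c ≤ |cos θ|} = ENNReal.ofReal (4 * arccos c) := by
  set A := arccos c
  have hA₀ : 0 ≤ A := arccos_nonneg c
  have hA : A < π / 2 := arccos_lt_pi_div_two.2 hc₀
  have hset : {θ | θ ∈ Ioo (-π) π ∧ c ≤ |cos θ|}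
      = Ioc (-π) (A - π) ∪ Icc (-A) A ∪ Ico (π - A) π := by
    ext θ
    simp only [mem_ofPred_eq, mem_Ioo, mem_union, mem_Ioc, mem_Icc, mem_Ico]
    by_cases hθ : |θ| ≤ π
    · rw [le_abs', le_cos_iff_abs_le_arccos (by linarith) hc₁ hθ, or_comm,
        cos_le_neg_iff_pi_sub_arccos_le_abs (by linarith) hc₁ hθ]
      rcases abs_cases θ with ⟨h, _⟩ | ⟨h, _⟩ <;> rw [h] <;> grind
    · rw [not_le, lt_abs] at hθ
      grind
  have hd₁ : Disjoint (Ioc (-π) (A - π)) (Icc (-A) A) :=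
    Set.disjoint_left.2 fun x h₁ h₂ => by linarith [h₁.2, h₂.1]
  have hd₂ : Disjoint (Ioc (-π) (A - π) ∪ Icc (-A) A) (Ico (π - A) π) :=
    Set.disjoint_left.2 fun x h₁ h₂ => by rcases h₁ with h₁ | h₁ <;> linarith [h₁.2, h₂.1]
  rw [hset, measure_union hd₂ measurableSet_Ico, measure_union hd₁ measurableSet_Icc,
    Real.volume_Ioc, Real.volume_Icc, Real.volume_Ico, ← ENNReal.ofReal_add (by linarith)
    (by linarith), ← ENNReal.ofReal_add (by linarith) (by linarith)]
  ring_nf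

def polarSection (S : Set (ℝ × ℝ)) (r : ℝ) : Set ℝ :=
  {θ | θ ∈ Ioo (-π) π ∧ (r * cos θ, r * sin θ) ∈ S}

lemma volume_eq_lintegral_polarSection {S : Set (ℝ × ℝ)} (hS : MeasurableSet S) :
    volume S = ∫⁻ r in Ioi 0, ENNReal.ofReal r * volume (polarSection S r) := by
  have hmeas : Measurable fun p : ℝ × ℝ =>
      ENNReal.ofReal p.1 • S.indicator (1 : ℝ × ℝ → ℝ≥0∞) (polarCoord.symm p) :=
    measurable_fst.ennreal_ofReal.smul ((measurable_one.indicator hS).comp (by fun_prop))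
  rw [← lintegral_indicator_one hS, ← lintegral_comp_polarCoord_symm,
    show polarCoord.target = Ioi 0 ×ˢ Ioo (-π) π from rfl, Measure.volume_eq_prod,
    ← Measure.prod_restrict, lintegral_prod _ hmeas.aemeasurable]
  refine setLIntegral_congr_fun measurableSet_Ioi fun r _ => ?_
  simp only [polarCoord_symm_apply, smul_eq_mul]
  have hg : Measurable fun θ => (r * cos θ, r * sin θ) := by fun_prop
  rw [lintegral_const_mul' _ _ ENNReal.ofReal_ne_top]
  change _ * ∫⁻ θ in Ioo (-π) π, ((fun θ => (r * cos θ, r * sin θ)) ⁻¹' S).indicator 1 θ = _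
  rw [lintegral_indicator_one (hS.preimage hg), Measure.restrict_apply (hS.preimage hg),
    polarSection, inter_comm]
  rfl

lemma polarSection_inter_sqrt_le (S : Set (ℝ × ℝ)) {r : ℝ} (hr : 0 ≤ r) (t : ℝ) :
    polarSection (S ∩ {p | √(p.1 ^ 2 + p.2 ^ 2) ≤ t}) r = {θ | θ ∈ polarSection S r ∧ r ≤ t} := by
  ext θ
  simp only [polarSection, mem_inter_iff, mem_ofPred_eq, mul_pow, ← mul_add, cos_sq_add_sin_sq,
    mul_one, sqrt_sq hr, and_assoc]

def ellipse (a b : ℝ) : Set (ℝ × ℝ) := {p | p.1 ^ 2 / a ^ 2 + p.2 ^ 2 / b ^ 2 ≤ 1}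

lemma measurableSet_ellipse (a b : ℝ) : MeasurableSet (ellipse a b) :=
  measurableSet_le (by fun_prop) measurable_const

lemma mem_ellipse_iff {a b : ℝ} (ha : a ≠ 0) (hb : b ≠ 0) {p : ℝ × ℝ} :
    p ∈ ellipse a b ↔ p.1 ^ 2 + p.2 ^ 2 - b ^ 2 ≤ (1 - b ^ 2 / a ^ 2) * p.1 ^ 2 := by
  have hb2 : 0 < b ^ 2 := by positivity
  have key : b ^ 2 - b ^ 2 * (p.1 ^ 2 / a ^ 2 + p.2 ^ 2 / b ^ 2)
      = (1 - b ^ 2 / a ^ 2) * p.1 ^ 2 - (p.1 ^ 2 + p.2 ^ 2 - b ^ 2) := by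
    field_simp
    ring
  rw [ellipse, mem_ofPred_eq, ← mul_le_mul_iff_of_pos_left hb2, mul_one, ← sub_nonneg, key,
    sub_nonneg]

lemma polar_mem_ellipse_iff {a b : ℝ} (ha : a ≠ 0) (hb : b ≠ 0) (r θ : ℝ) :
    (r * cos θ, r * sin θ) ∈ ellipse a b ↔
      r ^ 2 - b ^ 2 ≤ (1 - b ^ 2 / a ^ 2) * (r * cos θ) ^ 2 := by
  rw [mem_ellipse_iff ha hb, mul_pow, mul_pow, ← mul_add, cos_sq_add_sin_sq, mul_one]

lemma one_sub_sq_div_sq_pos {a b : ℝ} (hb : 0 < b) (hba : b < a) : 0 < 1 - b ^ 2 / a ^ 2 := by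
  have ha : 0 < a := hb.trans hba
  rw [sub_pos, div_lt_one (by positivity)]
  gcongr

lemma polarSection_ellipse_of_le {a b r : ℝ} (hb : 0 < b) (hba : b < a) (hr₀ : 0 ≤ r)
    (hrb : r ≤ b) : polarSection (ellipse a b) r = Ioo (-π) π := by
  refine (sep_eq_self_iff_mem_true).2 fun θ _ => ?_
  rw [polar_mem_ellipse_iff (by linarith) hb.ne']
  have : r ^ 2 ≤ b ^ 2 := by gcongr
  nlinarith [one_sub_sq_div_sq_pos hb hba, sq_nonneg (r * cos θ)]

lemma polarSection_ellipse_of_lt {a b r : ℝ} (hb : 0 < b) (hba : b < a) (hbr : b < r) :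
    polarSection (ellipse a b) r =
      {θ | θ ∈ Ioo (-π) π ∧ √(r ^ 2 - b ^ 2) / (√(1 - b ^ 2 / a ^ 2) * r) ≤ |cos θ|} := by
  have hε := one_sub_sq_div_sq_pos hb hba
  have hr : 0 < r := hb.trans hbr
  ext θ
  simp only [polarSection, mem_ofPred_eq]
  rw [polar_mem_ellipse_iff (by linarith) hb.ne', div_le_iff₀ (by positivity),
    sqrt_le_left (by positivity), mul_pow, mul_pow, mul_pow, sq_abs, sq_sqrt hε.le]
  ring_nf

lemma sqrt_sq_sub_sq_div_le_one {a b r : ℝ} (hb : 0 < b) (hba : b < a) (hbr : b < r) (hra : r ≤ a) :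
    √(r ^ 2 - b ^ 2) / (√(1 - b ^ 2 / a ^ 2) * r) ≤ 1 := by
  have ha : 0 < a := hb.trans hba
  have hr : 0 < r := hb.trans hbr
  have hε := one_sub_sq_div_sq_pos hb hba
  have : r ^ 2 ≤ a ^ 2 := by gcongr
  rw [div_le_one (by positivity), sqrt_le_left (by positivity), mul_pow, sq_sqrt hε.le]
  field_simp
  nlinarith

lemma ellipse_subset_sqrt_le {a b : ℝ} (hb : 0 < b) (hba : b < a) :
    ellipse a b ⊆ {p | √(p.1 ^ 2 + p.2 ^ 2) ≤ a} := by
  have ha : 0 < a := hb.trans hba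
  intro p hp
  have : p.2 ^ 2 / a ^ 2 ≤ p.2 ^ 2 / b ^ 2 := by gcongr
  rw [mem_ofPred_eq, sqrt_le_left ha.le, ← div_le_one (by positivity), add_div]
  exact (add_le_add_right this _).trans hp

lemma volume_setOf_sq_add_sq_le_one :
    volume {p : ℝ × ℝ | p.1 ^ 2 + p.2 ^ 2 ≤ 1} = ENNReal.ofReal π := by
  have hpre : Complex.measurableEquivRealProd ⁻¹' {p : ℝ × ℝ | p.1 ^ 2 + p.2 ^ 2 ≤ 1}
      = Metric.closedBall (0 : ℂ) 1 := by
    ext z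
    simp [Complex.norm_eq_sqrt_sq_add_sq]
  rw [← Complex.volume_preserving_equiv_real_prod.measure_preimage
    (measurableSet_le (by fun_prop) measurable_const).nullMeasurableSet, hpre,
    Complex.volume_closedBall]
  simp [← ENNReal.ofReal_coe_nnreal]

lemma volume_ellipse {a b : ℝ} (ha : 0 < a) (hb : 0 < b) :
    volume (ellipse a b) = ENNReal.ofReal (π * a * b) := by
  set L : ℝ × ℝ →ₗ[ℝ] ℝ × ℝ := (a⁻¹ • LinearMap.id).prodMap (b⁻¹ • LinearMap.id)
  have hdet : LinearMap.det L = (a * b)⁻¹ := by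
    simp [L, LinearMap.det_prodMap, mul_comm]
  have hL : ellipse a b = L ⁻¹' {p | p.1 ^ 2 + p.2 ^ 2 ≤ 1} := by
    ext p
    simp [ellipse, L, mul_pow, div_eq_inv_mul]
  rw [hL, Measure.addHaar_preimage_linearMap _ (by rw [hdet]; positivity), hdet, inv_inv,
    volume_setOf_sq_add_sq_le_one, abs_of_pos (by positivity), ← ENNReal.ofReal_mul (by positivity)]
  ring_nf

noncomputable def ellipseRadialDensity (a b r : ℝ) : ℝ :=
  if r ≤ b then 2 * r / (a * b)
  else 4 * r / (π * a * b) * arccos (√(r ^ 2 - b ^ 2) / (√(1 - b ^ 2 / a ^ 2) * r))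

lemma measurable_ellipseRadialDensity (a b : ℝ) : Measurable (ellipseRadialDensity a b) := by
  unfold ellipseRadialDensity
  exact Measurable.ite (measurableSet_le measurable_id measurable_const) (by fun_prop) (by fun_prop)

lemma ellipseRadialDensity_nonneg {a b r : ℝ} (ha : 0 < a) (hb : 0 < b) (hr : 0 ≤ r) :
    0 ≤ ellipseRadialDensity a b r := by
  unfold ellipseRadialDensity
  split_ifs
  · positivity
  · have := arccos_nonneg (√(r ^ 2 - b ^ 2) / (√(1 - b ^ 2 / a ^ 2) * r))
    positivity

lemma ellipseRadialDensity_le {a b r : ℝ} (hb : 0 < b) (hba : b < a) (hr : r ≤ a) :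
    ellipseRadialDensity a b r ≤ 4 / b := by
  have ha : 0 < a := hb.trans hba
  unfold ellipseRadialDensity
  split_ifs with hrb
  · calc 2 * r / (a * b) ≤ 2 * b / (a * b) := by gcongr
      _ = 2 / a := by field_simp
      _ ≤ 4 / b := by rw [div_le_div_iff₀ ha hb]; linarith
  · have hr : 0 < r := hb.trans (not_le.1 hrb)
    calc _ ≤ 4 * r / (π * a * b) * π := by gcongr; exact arccos_le_pi _
      _ = 4 * r / (a * b) := by field_simp
      _ ≤ 4 * a / (a * b) := by gcongr
      _ = 4 / b := by field_simp

lemma integrableOn_ellipseRadialDensity {a b t : ℝ} (hb : 0 < b) (hba : b < a) (ht : t ≤ a) :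
    IntegrableOn (ellipseRadialDensity a b) (Ioc 0 t) := by
  refine Measure.integrableOn_of_bounded (M := 4 / b) measure_Ioc_lt_top.ne
    (measurable_ellipseRadialDensity a b).aestronglyMeasurable ?_
  filter_upwards [ae_restrict_mem measurableSet_Ioc] with r hr
  rw [norm_of_nonneg (ellipseRadialDensity_nonneg (hb.trans hba) hb hr.1.le)]
  exact ellipseRadialDensity_le hb hba (hr.2.trans ht)

lemma ofReal_mul_volume_polarSection_ellipse {a b r : ℝ} (hb : 0 < b) (hba : b < a) (hr : 0 < r)
    (hra : r ≤ a) :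
    ENNReal.ofReal r * volume (polarSection (ellipse a b) r) =
      ENNReal.ofReal (π * a * b * ellipseRadialDensity a b r) := by
  have ha : 0 < a := hb.trans hba
  have hε := one_sub_sq_div_sq_pos hb hba
  rcases le_or_gt r b with hrb | hbr
  · rw [polarSection_ellipse_of_le hb hba hr.le hrb, Real.volume_Ioo, ← ENNReal.ofReal_mul hr.le,
      ellipseRadialDensity, if_pos hrb]
    congr 1
    field_simp
    ring
  · have hc₀ : 0 < √(r ^ 2 - b ^ 2) / (√(1 - b ^ 2 / a ^ 2) * r) := by
      have : 0 < r ^ 2 - b ^ 2 := by nlinarith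
      positivity
    rw [polarSection_ellipse_of_lt hb hba hbr,
      volume_setOf_le_abs_cos hc₀ (sqrt_sq_sub_sq_div_le_one hb hba hbr hra),
      ← ENNReal.ofReal_mul hr.le, ellipseRadialDensity, if_neg hbr.not_ge]
    congr 1
    field_simp

lemma volume_ellipse_inter_sqrt_le {a b t : ℝ} (hb : 0 < b) (hba : b < a) (ht₀ : 0 ≤ t)
    (hta : t ≤ a) :
    volume (ellipse a b ∩ {p | √(p.1 ^ 2 + p.2 ^ 2) ≤ t}) =
      ENNReal.ofReal (π * a * b * ∫ s in 0..t, ellipseRadialDensity a b s) := by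
  have ha : 0 < a := hb.trans hba
  have hslice : ∀ r ∈ Ioi (0 : ℝ),
      ENNReal.ofReal r * volume (polarSection (ellipse a b ∩ {p | √(p.1 ^ 2 + p.2 ^ 2) ≤ t}) r) =
        (Ioc 0 t).indicator
          (fun s => ENNReal.ofReal (π * a * b * ellipseRadialDensity a b s)) r := by
    intro r hr
    rw [polarSection_inter_sqrt_le _ (le_of_lt hr)]
    by_cases hrt : r ≤ t
    · simp only [hrt, and_true, ofPred_mem_eq]
      rw [indicator_of_mem (show r ∈ Ioc 0 t from ⟨hr, hrt⟩),
        ofReal_mul_volume_polarSection_ellipse hb hba hr (hrt.trans hta)]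
    · simp [hrt]
  have hmeas : MeasurableSet (ellipse a b ∩ {p : ℝ × ℝ | √(p.1 ^ 2 + p.2 ^ 2) ≤ t}) :=
    (measurableSet_ellipse a b).inter (measurableSet_le (by fun_prop) measurable_const)
  rw [volume_eq_lintegral_polarSection hmeas, setLIntegral_congr_fun measurableSet_Ioi hslice,
    lintegral_indicator measurableSet_Ioc, Measure.restrict_restrict measurableSet_Ioc,
    inter_eq_self_of_subset_left Ioc_subset_Ioi_self,
    ← ofReal_integral_eq_lintegral_ofReal
      ((integrableOn_ellipseRadialDensity hb hba hta).const_mul _)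
      (ae_restrict_of_forall_mem measurableSet_Ioc fun r hr =>
        mul_nonneg (by positivity) (ellipseRadialDensity_nonneg ha hb hr.1.le)),
    integral_const_mul, intervalIntegral.integral_of_le ht₀]

theorem stmt_4 (a b : ℝ) (hb : 0 < b) (hba : b < a)
    (E : Set (ℝ × ℝ)) (hE : E = {p : ℝ × ℝ | p.1^2 / a^2 + p.2^2 / b^2 ≤ 1})
    (ℰ : ℝ) (hℰ : ℰ = Real.sqrt (1 - b^2 / a^2))
    (f : ℝ → ℝ)
    (hf : ∀ r : ℝ, f r = if r ≤ b then 2 * r / (a * b)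
      else 4 * r / (π * a * b) * Real.arccos (Real.sqrt (r^2 - b^2) / (ℰ * r))) :
    (∀ t ∈ Set.Icc (0:ℝ) a,
      (volume (E ∩ {p : ℝ × ℝ | Real.sqrt (p.1^2 + p.2^2) ≤ t})).toReal
        / (volume E).toReal = ∫ s in (0:ℝ)..t, f s) ∧
    (∫ s in (0:ℝ)..a, f s) = 1 := by
  have ha : 0 < a := hb.trans hba
  have hπab : 0 < π * a * b := by positivity
  obtain rfl : E = ellipse a b := hE
  obtain rfl : f = ellipseRadialDensity a b := funext fun r => by
    rw [hf r, hℰ, ellipseRadialDensity]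
  have hcdf : ∀ t ∈ Icc 0 a, (volume (ellipse a b ∩ {p | √(p.1 ^ 2 + p.2 ^ 2) ≤ t})).toReal =
      π * a * b * ∫ s in 0..t, ellipseRadialDensity a b s := fun t ht => by
    rw [volume_ellipse_inter_sqrt_le hb hba ht.1 ht.2, ENNReal.toReal_ofReal]
    exact mul_nonneg hπab.le (intervalIntegral.integral_nonneg ht.1
      fun r hr => ellipseRadialDensity_nonneg ha hb hr.1)
  have hvol : (volume (ellipse a b)).toReal = π * a * b := by
    rw [volume_ellipse ha hb, ENNReal.toReal_ofReal hπab.le]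
  have htotal : ∫ s in 0..a, ellipseRadialDensity a b s = 1 := by
    have h := hcdf a ⟨ha.le, le_rfl⟩
    rw [inter_eq_self_of_subset_left (ellipse_subset_sqrt_le hb hba), hvol] at h
    exact (mul_eq_left₀ hπab.ne').1 h.symm
  refine ⟨fun t ht => ?_, htotal⟩
  rw [hcdf t ht, hvol, mul_div_cancel_left₀ _ hπab.ne']
end

section
/- Prove that ∫₀^b (2r/(ab)) dr + ∫_b^a (4r/(πab))·arccos(√(r² − b²)/(ℰ r)) dr = 1, where ℰ = √(1 − b²/a²) and 0 < b < a. -/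
/-! The first integral is `b / a`. For the second, `r * arccos (√(r² - b²) / (ℰ r))` has the
elementary antiderivative
`r² / 2 * arccos (√(r² - b²) / (ℰ r)) + a b / 4 * arcsin ((2 r² - a² - b²) / (a² - b²))`:
since `ℰ² a² = a² - b²`, the arccos term contributes `-a b r / (2 √(r² - b²) √(a² - r²))`
besides the integrand, and the arcsin term cancels it exactly. Evaluating between `b` and `a`
gives `π b (a - b) / 4`, so the second integral is `(a - b) / a`. -/

open Real Set

lemma hasDerivAt_arcsin_quadratic {a b r : ℝ} (hbr : b ^ 2 < r ^ 2) (hra : r ^ 2 < a ^ 2) :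
    HasDerivAt (fun x => arcsin ((2 * x ^ 2 - a ^ 2 - b ^ 2) / (a ^ 2 - b ^ 2)))
      (2 * r / (√(r ^ 2 - b ^ 2) * √(a ^ 2 - r ^ 2))) r := by
  have hab : 0 < a ^ 2 - b ^ 2 := by linarith
  have hs2 := sq_sqrt (sub_pos.2 hbr).le
  have ht2 := sq_sqrt (sub_pos.2 hra).le
  have hne_neg : (2 * r ^ 2 - a ^ 2 - b ^ 2) / (a ^ 2 - b ^ 2) ≠ -1 := by
    rw [ne_eq, div_eq_iff hab.ne']; intro h; linarith
  have hne_one : (2 * r ^ 2 - a ^ 2 - b ^ 2) / (a ^ 2 - b ^ 2) ≠ 1 := by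
    rw [ne_eq, div_eq_iff hab.ne']; intro h; linarith
  have hroot : √(1 - ((2 * r ^ 2 - a ^ 2 - b ^ 2) / (a ^ 2 - b ^ 2)) ^ 2)
      = 2 * √(r ^ 2 - b ^ 2) * √(a ^ 2 - r ^ 2) / (a ^ 2 - b ^ 2) := by
    rw [show 1 - ((2 * r ^ 2 - a ^ 2 - b ^ 2) / (a ^ 2 - b ^ 2)) ^ 2
        = (2 * √(r ^ 2 - b ^ 2) * √(a ^ 2 - r ^ 2) / (a ^ 2 - b ^ 2)) ^ 2 by
      field_simp
      rw [hs2, ht2]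
      ring]
    exact sqrt_sq (by positivity)
  have hinner : HasDerivAt (fun x => (2 * x ^ 2 - a ^ 2 - b ^ 2) / (a ^ 2 - b ^ 2))
      (2 * (2 * r) / (a ^ 2 - b ^ 2)) r := by
    have := (((hasDerivAt_pow 2 r).const_mul 2).sub_const (a ^ 2)).sub_const (b ^ 2)
    simpa using this.div_const (a ^ 2 - b ^ 2)
  refine ((hasDerivAt_arcsin hne_neg hne_one).comp r hinner).congr_deriv ?_
  rw [hroot]
  field_simp

section Ellipse

variable {a b ℰ : ℝ} (hb : 0 < b) (hba : b < a) (hE : 0 < ℰ) (hE2 : ℰ ^ 2 * a ^ 2 = a ^ 2 - b ^ 2)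
include hb hE hE2

lemma hasDerivAt_arccos_sqrt_div {r : ℝ} (hbr : b < r) (hra : r < a) :
    HasDerivAt (fun x => arccos (√(x ^ 2 - b ^ 2) / (ℰ * x)))
      (-(a * b) / (r * (√(r ^ 2 - b ^ 2) * √(a ^ 2 - r ^ 2)))) r := by
  have hr : 0 < r := hb.trans hbr
  have ha : 0 < a := hr.trans hra
  have hs2 := sq_sqrt (show 0 ≤ r ^ 2 - b ^ 2 by nlinarith)
  have ht2 := sq_sqrt (show 0 ≤ a ^ 2 - r ^ 2 by nlinarith)
  have hroot : √(1 - (√(r ^ 2 - b ^ 2) / (ℰ * r)) ^ 2) = b * √(a ^ 2 - r ^ 2) / (a * ℰ * r) := by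
    rw [show 1 - (√(r ^ 2 - b ^ 2) / (ℰ * r)) ^ 2 = (b * √(a ^ 2 - r ^ 2) / (a * ℰ * r)) ^ 2 by
      field_simp
      rw [hs2, ht2]
      linear_combination r ^ 2 * hE2]
    exact sqrt_sq (by positivity)
  have hlt_one : √(r ^ 2 - b ^ 2) / (ℰ * r) < 1 := by
    rw [div_lt_one (by positivity), sqrt_lt' (by positivity)]
    refine lt_of_mul_lt_mul_right (a := a ^ 2) ?_ (by positivity)
    have : 0 < b ^ 2 * (a ^ 2 - r ^ 2) := mul_pos (pow_pos hb 2) (by nlinarith)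
    linear_combination (-r ^ 2) * hE2 + this
  have hinner : HasDerivAt (fun x => √(x ^ 2 - b ^ 2) / (ℰ * x))
      ((2 * r / (2 * √(r ^ 2 - b ^ 2)) * (ℰ * r) - √(r ^ 2 - b ^ 2) * ℰ) / (ℰ * r) ^ 2) r := by
    have hsq : HasDerivAt (fun x => x ^ 2 - b ^ 2) (2 * r) r := by
      simpa using (hasDerivAt_pow 2 r).sub_const (b ^ 2)
    have hlin : HasDerivAt (fun x => ℰ * x) ℰ r := by
      simpa using (hasDerivAt_id r).const_mul ℰ
    exact (hsq.sqrt (by nlinarith)).div hlin (by positivity)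
  refine ((hasDerivAt_arccos (by linarith [show 0 ≤ √(r ^ 2 - b ^ 2) / (ℰ * r) by positivity])
    hlt_one.ne).comp r hinner).congr_deriv ?_
  rw [hroot]
  field_simp
  rw [hs2]
  ring

lemma hasDerivAt_arccos_sqrt_div_antideriv {r : ℝ} (hbr : b < r) (hra : r < a) :
    HasDerivAt (fun x => x ^ 2 / 2 * arccos (√(x ^ 2 - b ^ 2) / (ℰ * x))
        + a * b / 4 * arcsin ((2 * x ^ 2 - a ^ 2 - b ^ 2) / (a ^ 2 - b ^ 2)))
      (r * arccos (√(r ^ 2 - b ^ 2) / (ℰ * r))) r := by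
  have hr : 0 < r := hb.trans hbr
  have hhalf : HasDerivAt (fun x : ℝ => x ^ 2 / 2) r r := by
    simpa using (hasDerivAt_pow 2 r).div_const 2
  refine ((hhalf.mul (hasDerivAt_arccos_sqrt_div hb hE hE2 hbr hra)).add
    ((hasDerivAt_arcsin_quadratic (by nlinarith) (by nlinarith)).const_mul (a * b / 4))).congr_deriv
    ?_
  field_simp
  ring

include hba in
lemma integral_mul_arccos_sqrt_div :
    ∫ r in b..a, r * arccos (√(r ^ 2 - b ^ 2) / (ℰ * r)) = π * b * (a - b) / 4 := by
  have ha : 0 < a := hb.trans hba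
  have hab : 0 < a ^ 2 - b ^ 2 := by nlinarith
  have hcont : ContinuousOn (fun r => √(r ^ 2 - b ^ 2) / (ℰ * r)) (Icc b a) :=
    (by fun_prop : Continuous fun r : ℝ => √(r ^ 2 - b ^ 2)).continuousOn.div
      (continuousOn_const.mul continuousOn_id) fun x hx => by
        have := hb.trans_le hx.1; positivity
  rw [intervalIntegral.integral_eq_sub_of_hasDerivAt_of_le hba.le ?_
    (fun r hr => hasDerivAt_arccos_sqrt_div_antideriv hb hE hE2 hr.1 hr.2) ?_]
  · have hga : √(a ^ 2 - b ^ 2) / (ℰ * a) = 1 := by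
      rw [← hE2, ← mul_pow, sqrt_sq (by positivity), div_self (by positivity)]
    have hha : (2 * a ^ 2 - a ^ 2 - b ^ 2) / (a ^ 2 - b ^ 2) = 1 := by
      rw [div_eq_one_iff_eq hab.ne']; ring
    have hhb : (2 * b ^ 2 - a ^ 2 - b ^ 2) / (a ^ 2 - b ^ 2) = -1 := by
      rw [div_eq_iff hab.ne']; ring
    simp only [hga, hha, hhb, sub_self, sqrt_zero, zero_div, arccos_one, arccos_zero, arcsin_one,
      arcsin_neg_one]
    ring
  · exact (((continuousOn_pow 2).div_const 2).mul (continuous_arccos.comp_continuousOn hcont)).add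
      (by fun_prop : Continuous fun x : ℝ =>
        a * b / 4 * arcsin ((2 * x ^ 2 - a ^ 2 - b ^ 2) / (a ^ 2 - b ^ 2))).continuousOn
  · exact (continuousOn_id.mul (continuous_arccos.comp_continuousOn hcont))
      |>.intervalIntegrable_of_Icc hba.le

end Ellipse

theorem stmt_5 (a b : ℝ) (hb : 0 < b) (hba : b < a)
    (ℰ : ℝ) (hℰ : ℰ = Real.sqrt (1 - b^2 / a^2)) :
    (∫ r in (0:ℝ)..b, 2 * r / (a * b)) +
      (∫ r in b..a, 4 * r / (π * a * b) *
        Real.arccos (Real.sqrt (r^2 - b^2) / (ℰ * r))) = 1 := by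
  have ha : 0 < a := hb.trans hba
  have hecc : 0 < 1 - b ^ 2 / a ^ 2 := by
    rw [sub_pos, div_lt_one (by positivity)]; nlinarith
  have hE : 0 < ℰ := hℰ ▸ sqrt_pos.2 hecc
  have hE2 : ℰ ^ 2 * a ^ 2 = a ^ 2 - b ^ 2 := by
    rw [hℰ, sq_sqrt hecc.le]; field_simp
  simp_rw [div_mul_eq_mul_div, mul_assoc (4 : ℝ), intervalIntegral.integral_div,
    intervalIntegral.integral_const_mul, integral_mul_arccos_sqrt_div hb hba hE hE2]
  rw [intervalIntegral.integral_const_mul, integral_id]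
  field_simp
  ring
end
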